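/- arXiv:1309.3452 — 4 statements merged into one kernel-verified Lean document; each statement's English description precedes it below -/
import Mathlib

section
/- Let X(k) = sqrt((M² + P²)/(M² + (2ħ/Δt)²)) where M = mc², P² = c²Σ_j (2ħ/Δ_j)² sin²(k_jΔ_j/2) for j = x,y,z. If Δ_o = cΔt and r_j = Δ_o/Δ_j satisfy r_x² + r_y² + r_z² ≤ 1, then X(k) ≤ 1 for all real k, so that ω = ±(2/Δt) arcsin(X(k)) is real. -/
open Real

/-!
Since `c · (2ħ/Δ_j) = (2ħ/Δt) · r_j`, each spatial term satisfies
`c² (2ħ/Δ_j)² sin²(k_jΔ_j/2) ≤ (2ħ/Δt)² r_j²`, so the CFL-type condition `Σ r_j² ≤ 1` bounds the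
numerator of `X(k)²` by its denominator.
-/

theorem sq_mul_sin_le_sq (r θ : ℝ) : (r * sin θ) ^ 2 ≤ r ^ 2 := by
  rw [mul_pow]
  exact mul_le_of_le_one_right (sq_nonneg r) (sin_sq_le_one θ)

theorem sq_mul_sq_div_mul_sin_le (a c t d θ : ℝ) (ht : t ≠ 0) :
    c ^ 2 * (a / d * sin θ) ^ 2 ≤ (a / t) ^ 2 * (c * t / d) ^ 2 :=
  calc c ^ 2 * (a / d * sin θ) ^ 2 = (a / t) ^ 2 * (c * t / d * sin θ) ^ 2 := by
        field_simp
    _ ≤ (a / t) ^ 2 * (c * t / d) ^ 2 :=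
        mul_le_mul_of_nonneg_left (sq_mul_sin_le_sq _ _) (sq_nonneg _)

theorem stmt_3_general (m c hbar Δt Δx Δy Δz : ℝ)
    (hΔt : 0 < Δt)
    (hr : (c * Δt / Δx) ^ 2 + (c * Δt / Δy) ^ 2 + (c * Δt / Δz) ^ 2 ≤ 1)
    (kx ky kz : ℝ) :
    Real.sqrt (((m * c ^ 2) ^ 2
        + c ^ 2 * ((2 * hbar / Δx * Real.sin (kx * Δx / 2)) ^ 2
          + (2 * hbar / Δy * Real.sin (ky * Δy / 2)) ^ 2
          + (2 * hbar / Δz * Real.sin (kz * Δz / 2)) ^ 2))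
      / ((m * c ^ 2) ^ 2 + (2 * hbar / Δt) ^ 2)) ≤ 1 := by
  have hx := sq_mul_sq_div_mul_sin_le (2 * hbar) c Δt Δx (kx * Δx / 2) hΔt.ne'
  have hy := sq_mul_sq_div_mul_sin_le (2 * hbar) c Δt Δy (ky * Δy / 2) hΔt.ne'
  have hz := sq_mul_sq_div_mul_sin_le (2 * hbar) c Δt Δz (kz * Δz / 2) hΔt.ne'
  have hcfl := mul_le_mul_of_nonneg_left hr (sq_nonneg (2 * hbar / Δt))
  rw [Real.sqrt_le_one]
  apply div_le_one_of_le₀ _ (by positivity)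
  linarith

/-- Reality of the (3+1)D lattice dispersion: if `r_x² + r_y² + r_z² ≤ 1` with
`r_j = cΔt/Δ_j`, then `X(k) ≤ 1` for all real wave vectors `k`, so that
`ω = ±(2/Δt) arcsin(X(k))` is real. -/
theorem stmt_3 (m c hbar Δt Δx Δy Δz : ℝ)
    (hm : 0 ≤ m) (hc : 0 < c) (hbar_pos : 0 < hbar) (hΔt : 0 < Δt)
    (hΔx : 0 < Δx) (hΔy : 0 < Δy) (hΔz : 0 < Δz)
    (hr : (c * Δt / Δx) ^ 2 + (c * Δt / Δy) ^ 2 + (c * Δt / Δz) ^ 2 ≤ 1)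
    (kx ky kz : ℝ) :
    Real.sqrt (((m * c ^ 2) ^ 2
        + c ^ 2 * ((2 * hbar / Δx * Real.sin (kx * Δx / 2)) ^ 2
          + (2 * hbar / Δy * Real.sin (ky * Δy / 2)) ^ 2
          + (2 * hbar / Δz * Real.sin (kz * Δz / 2)) ^ 2))
      / ((m * c ^ 2) ^ 2 + (2 * hbar / Δt) ^ 2)) ≤ 1 :=
  stmt_3_general m c hbar Δt Δx Δy Δz hΔt hr kx ky kz
end

section
/- The lattice dispersion function E(k) = sqrt(m²c⁴ + Σ_j c²(2ħ/Δ_j)² sin²(k_jΔ_j/2)) with m = 0 vanishes on the Brillouin zone (−π/Δ_x, π/Δ_x] × (−π/Δ_y, π/Δ_y] × (−π/Δ_z, π/Δ_z] only at k = 0 (single Dirac cone, no fermion doubling). -/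
open Real

/-! On the Brillouin zone the half phase `k Δ / 2` lies in `(-π/2, π/2]`, where the only zero of
`sin` is `0`; since every weight `c² (2ħ/Δ)²` is positive, the sum of squares under the root
vanishes only when all three sines do. -/

lemma sin_mul_div_two_eq_zero_iff {Δ k : ℝ} (hΔ : 0 < Δ) (hk₁ : -(π / Δ) < k) (hk₂ : k ≤ π / Δ) :
    sin (k * Δ / 2) = 0 ↔ k = 0 := by
  have hlo : -π < k * Δ := by rwa [← neg_div, div_lt_iff₀ hΔ] at hk₁
  have hhi : k * Δ ≤ π := by rwa [le_div_iff₀ hΔ] at hk₂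
  rw [sin_eq_zero_iff_of_lt_of_lt (by linarith [pi_pos]) (by linarith [pi_pos])]
  simp [hΔ.ne']

lemma sqrt_weighted_sum_sq_eq_zero_iff {a b c x y z : ℝ} (ha : 0 < a) (hb : 0 < b) (hc : 0 < c) :
    √(a * x ^ 2 + b * y ^ 2 + c * z ^ 2) = 0 ↔ x = 0 ∧ y = 0 ∧ z = 0 := by
  rw [sqrt_eq_zero (by positivity), add_eq_zero_iff_of_nonneg (by positivity) (by positivity),
    add_eq_zero_iff_of_nonneg (by positivity) (by positivity)]
  simp [ha.ne', hb.ne', hc.ne', and_assoc]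

/-- Single Dirac cone / no fermion doubling: the massless lattice dispersion
`E(k) = sqrt(Σ_j c²(2ħ/Δ_j)² sin²(k_jΔ_j/2))` vanishes on the Brillouin zone
`(−π/Δ_x, π/Δ_x] × (−π/Δ_y, π/Δ_y] × (−π/Δ_z, π/Δ_z]` only at `k = 0`. -/
theorem stmt_5 (c hbar Δx Δy Δz : ℝ)
    (hc : 0 < c) (hbar_pos : 0 < hbar) (hΔx : 0 < Δx) (hΔy : 0 < Δy) (hΔz : 0 < Δz)
    (kx ky kz : ℝ)
    (hkx₁ : -(π / Δx) < kx) (hkx₂ : kx ≤ π / Δx)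
    (hky₁ : -(π / Δy) < ky) (hky₂ : ky ≤ π / Δy)
    (hkz₁ : -(π / Δz) < kz) (hkz₂ : kz ≤ π / Δz) :
    Real.sqrt (c ^ 2 * (2 * hbar / Δx) ^ 2 * Real.sin (kx * Δx / 2) ^ 2
      + c ^ 2 * (2 * hbar / Δy) ^ 2 * Real.sin (ky * Δy / 2) ^ 2
      + c ^ 2 * (2 * hbar / Δz) ^ 2 * Real.sin (kz * Δz / 2) ^ 2) = 0
    ↔ (kx = 0 ∧ ky = 0 ∧ kz = 0) := by
  rw [sqrt_weighted_sum_sq_eq_zero_iff (by positivity) (by positivity) (by positivity),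
    sin_mul_div_two_eq_zero_iff hΔx hkx₁ hkx₂, sin_mul_div_two_eq_zero_iff hΔy hky₁ hky₂,
    sin_mul_div_two_eq_zero_iff hΔz hkz₁ hkz₂]
end

section
/- The averaged quantity ‖ũ‖² := Σ_j |(u_{j+e_x} − i u_{j+e_x/2+e_y/2} + u_j − i u_{j+e_x/2−e_y/2})/(2√2)|², with the sum over j ∈ ℤ² ∪ (ℤ+1/2)², defines a norm on ℓ²(ℤ² ∪ (ℤ+1/2)²; ℂ): in particular ‖ũ‖ = 0 implies u = 0. -/
/-!
On the even-sum sites `(m + n, m - n)` the vanishing of the stencil becomes the relation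
`y (n + 1) - i y n + x n - i x (n + 1) = 0` between consecutive diagonal rows `x = u (m + ·, m - ·)`
and `y` (row `m + 1`), i.e. `y n + i y (n + 1) = -i x n - x (n + 1)`. Comparing the lag-one
autocorrelations of the two sides shows that `Im ⟨x, S x⟩` is nondecreasing in `m`, with increment
at least `‖x‖² - Re ⟨x, S² x⟩ ≥ 0`. The rows' norms tend to `0` at both ends, so `Im ⟨x, S x⟩`
vanishes for every row, forcing `Re ⟨x, S² x⟩ = ‖x‖²`: each row is `2`-periodic, hence zero.
-/

noncomputable section
open Complex

/-- The face-centered lattice `ℤ² ∪ (ℤ+1/2)²`, encoded in half-unit coordinates as the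
points of `ℤ²` with even coordinate sum.  A shift by `(1,1)` is the shift `e_x/2 + e_y/2`,
and `(2,0)` is `e_x`. -/
def FCLat : Type := {j : ℤ × ℤ // Even (j.1 + j.2)}

open ComplexConjugate Filter Topology Function

def autocorr (x : ℤ → ℂ) (k : ℤ) : ℂ := ∑' n, conj (x n) * x (n + k)

lemma norm_conj_mul_le_half (a b : ℂ) : ‖conj a * b‖ ≤ (‖a‖ ^ 2 + ‖b‖ ^ 2) / 2 := by
  rw [norm_mul, RCLike.norm_conj]
  nlinarith [sq_nonneg (‖a‖ - ‖b‖)]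

lemma autocorr_zero (x : ℤ → ℂ) : autocorr x 0 = ((∑' n, ‖x n‖ ^ 2 : ℝ) : ℂ) := by
  simp [autocorr, conj_mul', ofReal_tsum]

lemma autocorr_zero_re (x : ℤ → ℂ) : (autocorr x 0).re = ∑' n, ‖x n‖ ^ 2 := by
  rw [autocorr_zero, ofReal_re]

section Autocorrelation

variable {x : ℤ → ℂ}

lemma hasSum_sq_comp_add (hx : Summable fun n => ‖x n‖ ^ 2) (k : ℤ) :
    HasSum (fun n => ‖x (n + k)‖ ^ 2) (autocorr x 0).re := by
  rw [autocorr_zero_re]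
  exact (Equiv.addRight k).hasSum_iff.2 hx.hasSum

lemma summable_norm_conj_mul (hx : Summable fun n => ‖x n‖ ^ 2) (k : ℤ) :
    Summable fun n => ‖conj (x n) * x (n + k)‖ :=
  .of_nonneg_of_le (fun _ => norm_nonneg _) (fun _ => norm_conj_mul_le_half _ _)
    ((hx.add (hasSum_sq_comp_add hx k).summable).div_const 2)

lemma hasSum_autocorr (hx : Summable fun n => ‖x n‖ ^ 2) (k : ℤ) :
    HasSum (fun n => conj (x n) * x (n + k)) (autocorr x k) :=
  (summable_norm_conj_mul hx k).of_norm.hasSum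

lemma norm_autocorr_le (hx : Summable fun n => ‖x n‖ ^ 2) (k : ℤ) :
    ‖autocorr x k‖ ≤ (autocorr x 0).re := by
  have hsum := summable_norm_conj_mul hx k
  have hS := ((hasSum_sq_comp_add hx 0).add (hasSum_sq_comp_add hx k)).div_const 2
  simp only [add_zero] at hS
  calc ‖autocorr x k‖ ≤ ∑' n, ‖conj (x n) * x (n + k)‖ := norm_tsum_le_tsum_norm hsum
    _ ≤ ∑' n, (‖x n‖ ^ 2 + ‖x (n + k)‖ ^ 2) / 2 :=
      hsum.tsum_le_tsum (fun _ => norm_conj_mul_le_half _ _) hS.summable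
    _ = (autocorr x 0).re := by rw [hS.tsum_eq]; ring

lemma autocorr_one_add_shift (hx : Summable fun n => ‖x n‖ ^ 2) (α β : ℂ) :
    autocorr (fun n => α * x n + β * x (n + 1)) 1
      = conj α * α * autocorr x 1 + conj α * β * autocorr x 2
        + (conj β * α * autocorr x 0 + conj β * β * autocorr x 1) := by
  have h := hasSum_autocorr hx
  have h' : ∀ k, HasSum (fun n => conj (x (n + 1)) * x (n + 1 + k)) (autocorr x k) :=
    fun k => (Equiv.addRight (1 : ℤ)).hasSum_iff.2 (h k)
  have hsum := (((h 1).mul_left (conj α * α)).add ((h 2).mul_left (conj α * β))).add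
    (((h' 0).mul_left (conj β * α)).add ((h' 1).mul_left (conj β * β)))
  refine (hsum.congr_fun fun n => ?_).tsum_eq
  simp only [map_add, map_mul, add_zero, add_assoc, one_add_one_eq_two]
  ring

lemma hasSum_norm_sub_sq (hx : Summable fun n => ‖x n‖ ^ 2) (k : ℤ) :
    HasSum (fun n => ‖x (n + k) - x n‖ ^ 2) (2 * ((autocorr x 0).re - (autocorr x k).re)) := by
  have hS := hasSum_sq_comp_add hx 0
  simp only [add_zero] at hS
  rw [mul_sub, two_mul]
  refine (((hasSum_sq_comp_add hx k).add hS).sub ((hasSum_re (hasSum_autocorr hx k)).mul_left 2)).congr_fun fun n => ?_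
  simp only [Complex.sq_norm, normSq_sub, mul_comm (x (n + k))]

lemma Function.Periodic.eq_zero_of_tendsto_cofinite {E : Type*} [TopologicalSpace E] [T1Space E]
    [Zero E] {f : ℤ → E} {c : ℤ} (hf : Periodic f c) (hc : c ≠ 0)
    (h : Tendsto f cofinite (𝓝 0)) : f = 0 := by
  funext n
  have hinj : Injective fun m : ℤ => n + m * c := fun m m' hm => by
    simpa [hc] using hm
  have hconst : Tendsto (fun m : ℤ => f (n + m * c)) cofinite (𝓝 0) :=
    h.comp hinj.tendsto_cofinite
  have hfn : ∀ m : ℤ, f (n + m * c) = f n := fun m => hf.int_mul m n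
  simp only [hfn] at hconst
  exact tendsto_const_nhds_iff.1 hconst

lemma eq_zero_of_autocorr_re_eq (hx : Summable fun n => ‖x n‖ ^ 2) {k : ℤ} (hk : k ≠ 0)
    (h : (autocorr x k).re = (autocorr x 0).re) : x = 0 := by
  have hsum := hasSum_norm_sub_sq hx k
  rw [h, sub_self, mul_zero, hasSum_zero_iff_of_nonneg fun _ => by positivity] at hsum
  have hper : Periodic x k := fun n => by
    simpa [sub_eq_zero] using congrFun hsum n
  have hsq := (hper.comp fun z => ‖z‖ ^ 2).eq_zero_of_tendsto_cofinite hk hx.tendsto_cofinite_zero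
  funext n
  simpa using congrFun hsq n

end Autocorrelation

section Transfer

variable {x y : ℤ → ℂ}

lemma autocorr_transfer (hx : Summable fun n => ‖x n‖ ^ 2) (hy : Summable fun n => ‖y n‖ ^ 2)
    (h : ∀ n, y (n + 1) - I * y n + x n - I * x (n + 1) = 0) :
    2 * (autocorr y 1).im + (autocorr y 2).re - (autocorr y 0).re
      = 2 * (autocorr x 1).im - (autocorr x 2).re + (autocorr x 0).re := by
  have hrows : (fun n => 1 * y n + I * y (n + 1)) = fun n => -I * x n + -1 * x (n + 1) :=
    funext fun n => by linear_combination I * h n + (y n + x (n + 1)) * I_mul_I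
  have hcorr := congrArg (fun z => autocorr z 1) hrows
  simp only [autocorr_one_add_shift hy, autocorr_one_add_shift hx, map_one, map_neg, conj_I] at hcorr
  have := congrArg im hcorr
  simp only [mul_one, one_mul, neg_mul, I_mul_I, neg_neg, add_im, mul_im, I_re, zero_mul, I_im,
    zero_add, neg_im, mul_neg] at this
  linarith

lemma im_autocorr_one_le (hx : Summable fun n => ‖x n‖ ^ 2) (hy : Summable fun n => ‖y n‖ ^ 2)
    (h : ∀ n, y (n + 1) - I * y n + x n - I * x (n + 1) = 0) :
    (autocorr x 1).im ≤ (autocorr y 1).im := by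
  have hx2 := (abs_re_le_norm _).trans (norm_autocorr_le hx 2)
  have hy2 := (abs_re_le_norm _).trans (norm_autocorr_le hy 2)
  linarith [autocorr_transfer hx hy h, abs_le.1 hx2, abs_le.1 hy2]

lemma autocorr_two_re_eq_of_im_eq (hx : Summable fun n => ‖x n‖ ^ 2)
    (hy : Summable fun n => ‖y n‖ ^ 2) (h : ∀ n, y (n + 1) - I * y n + x n - I * x (n + 1) = 0)
    (him : (autocorr x 1).im = (autocorr y 1).im) :
    (autocorr x 2).re = (autocorr x 0).re := by
  have hx2 := (abs_re_le_norm _).trans (norm_autocorr_le hx 2)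
  have hy2 := (abs_re_le_norm _).trans (norm_autocorr_le hy 2)
  linarith [autocorr_transfer hx hy h, abs_le.1 hx2, abs_le.1 hy2]

end Transfer

lemma Monotone.eq_zero_of_tendsto_atBot_atTop {α β : Type*} [Preorder α] [IsDirectedOrder α]
    [IsCodirectedOrder α] [PartialOrder β] [TopologicalSpace β] [OrderClosedTopology β] [Zero β]
    {f : α → β} (hf : Monotone f) (hbot : Tendsto f atBot (𝓝 0)) (htop : Tendsto f atTop (𝓝 0)) :
    f = 0 :=
  funext fun a => le_antisymm (hf.ge_of_tendsto htop a) (hf.le_of_tendsto hbot a)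

lemma memℓp_two_iff {α E : Type*} [NormedAddCommGroup E] {f : α → E} :
    Memℓp f 2 ↔ Summable fun i => ‖f i‖ ^ 2 := by
  rw [memℓp_gen_iff (by norm_num)]
  norm_num

lemma eq_zero_of_tsum_norm_sq_eq_zero {α E : Type*} [NormedAddCommGroup E]
    {f : α → E} (hf : Summable fun i => ‖f i‖ ^ 2) (h : ∑' i, ‖f i‖ ^ 2 = 0) : f = 0 := by
  have hsum := hf.hasSum
  rw [h, hasSum_zero_iff_of_nonneg fun _ => by positivity] at hsum
  funext i
  simpa using congrFun hsum i

lemma FCLat.translate_injective (a b : ℤ) : Injective fun j : FCLat => (j.1.1 + a, j.1.2 + b) :=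
  fun j k h => Subtype.ext (Prod.ext_iff.2 (by simpa using h))

lemma stencil_eq_zero_of_tsum_eq_zero {u : ℤ × ℤ → ℂ} (hu : Memℓp u 2)
    (hnorm : ∑' j : FCLat,
        ‖(u (j.1.1 + 2, j.1.2) - I * u (j.1.1 + 1, j.1.2 + 1)
            + u j.1 - I * u (j.1.1 + 1, j.1.2 - 1)) / (2 * Real.sqrt 2)‖ ^ 2 = 0)
    (j : FCLat) :
    u (j.1.1 + 2, j.1.2) - I * u (j.1.1 + 1, j.1.2 + 1) + u j.1 - I * u (j.1.1 + 1, j.1.2 - 1)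
      = 0 := by
  have htranslate : ∀ a b : ℤ, Memℓp (fun j : FCLat => u (j.1.1 + a, j.1.2 + b)) 2 := fun a b =>
    memℓp_two_iff.2 ((memℓp_two_iff.1 hu).comp_injective (FCLat.translate_injective a b))
  have hstencil := memℓp_two_iff.1 ((((htranslate 2 0).sub ((htranslate 1 1).const_mul I)).add
    (htranslate 0 0)).sub ((htranslate 1 (-1)).const_mul I))
  simp only [add_zero, ← sub_eq_add_neg, Pi.add_apply, Pi.sub_apply, Prod.mk.eta] at hstencil
  have hdiv : Summable fun j : FCLat =>
      ‖(u (j.1.1 + 2, j.1.2) - I * u (j.1.1 + 1, j.1.2 + 1)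
          + u j.1 - I * u (j.1.1 + 1, j.1.2 - 1)) / (2 * Real.sqrt 2)‖ ^ 2 := by
    simpa only [norm_div, div_pow] using hstencil.div_const (‖(2 * Real.sqrt 2 : ℂ)‖ ^ 2)
  have := congrFun (eq_zero_of_tsum_norm_sq_eq_zero hdiv hnorm) j
  simpa using this

def diagRow (u : ℤ × ℤ → ℂ) (m n : ℤ) : ℂ := u (m + n, m - n)

section DiagRow

variable {u : ℤ × ℤ → ℂ}

lemma summable_sq_uncurry_diagRow (hu : Summable fun j => ‖u j‖ ^ 2) :
    Summable fun p : ℤ × ℤ => ‖diagRow u p.1 p.2‖ ^ 2 :=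
  hu.comp_injective fun p q h => by
    simp only [Prod.mk.injEq] at h
    exact Prod.ext (by omega) (by omega)

lemma summable_sq_diagRow (hu : Summable fun j => ‖u j‖ ^ 2) (m : ℤ) :
    Summable fun n => ‖diagRow u m n‖ ^ 2 :=
  (summable_sq_uncurry_diagRow hu).prod_factor m

lemma tendsto_autocorr_zero_diagRow (hu : Summable fun j => ‖u j‖ ^ 2) :
    Tendsto (fun m => (autocorr (diagRow u m) 0).re) cofinite (𝓝 0) := by
  simp only [autocorr_zero_re]
  exact (summable_sq_uncurry_diagRow hu).prod.tendsto_cofinite_zero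

lemma diagRow_transfer
    (hstencil : ∀ j : FCLat, u (j.1.1 + 2, j.1.2) - I * u (j.1.1 + 1, j.1.2 + 1) + u j.1
      - I * u (j.1.1 + 1, j.1.2 - 1) = 0) (m n : ℤ) :
    diagRow u (m + 1) (n + 1) - I * diagRow u (m + 1) n + diagRow u m n
      - I * diagRow u m (n + 1) = 0 := by
  have h := hstencil ⟨(m + n, m - n), m, by ring⟩
  dsimp only at h
  rw [diagRow, diagRow, diagRow, diagRow,
    show (m + 1 + (n + 1), m + 1 - (n + 1)) = (m + n + 2, m - n) from Prod.ext (by ring) (by ring),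
    show (m + 1 + n, m + 1 - n) = (m + n + 1, m - n + 1) from Prod.ext (by ring) (by ring),
    show (m + (n + 1), m - (n + 1)) = (m + n + 1, m - n - 1) from Prod.ext (by ring) (by ring)]
  exact h

end DiagRow

/-- The grid-averaged quantity `‖ũ‖²` is a norm on `ℓ²` of the face-centered lattice:
if `‖ũ‖ = 0` then `u = 0`. -/
theorem stmt_11 (u : ℤ × ℤ → ℂ) (hu : Memℓp u 2)
    (hvan : ∀ j : ℤ × ℤ, ¬ Even (j.1 + j.2) → u j = 0)
    (hnorm : ∑' j : FCLat,
        ‖(u (j.1.1 + 2, j.1.2) - Complex.I * u (j.1.1 + 1, j.1.2 + 1)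
            + u j.1 - Complex.I * u (j.1.1 + 1, j.1.2 - 1)) / (2 * Real.sqrt 2)‖ ^ 2 = 0) :
    u = 0 := by
  have hsq := memℓp_two_iff.1 hu
  have hrow := summable_sq_diagRow hsq
  have htransfer := diagRow_transfer (stencil_eq_zero_of_tsum_eq_zero hu hnorm)
  set J : ℤ → ℝ := fun m => (autocorr (diagRow u m) 1).im
  have hJ : Tendsto J cofinite (𝓝 0) :=
    squeeze_zero_norm (fun m => (abs_im_le_norm _).trans (norm_autocorr_le (hrow m) 1))
      (tendsto_autocorr_zero_diagRow hsq)
  have hJmono : Monotone J :=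
    monotone_int_of_le_succ fun m => im_autocorr_one_le (hrow m) (hrow (m + 1)) (htransfer m)
  have hJ0 : J = 0 := hJmono.eq_zero_of_tendsto_atBot_atTop
    (hJ.mono_left atBot_le_cofinite) (hJ.mono_left atTop_le_cofinite)
  have hdiag : ∀ m, diagRow u m = 0 := fun m =>
    eq_zero_of_autocorr_re_eq (hrow m) two_ne_zero <| autocorr_two_re_eq_of_im_eq (hrow m)
      (hrow (m + 1)) (htransfer m) ((congrFun hJ0 m).trans (congrFun hJ0 (m + 1)).symm)
  funext ⟨a, b⟩
  by_cases hab : Even (a + b)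
  · obtain ⟨m, hm⟩ := hab
    simpa [diagRow, show m + (a - m) = a by ring, show m - (a - m) = b by omega]
      using congrFun (hdiag m) (a - m)
  · exact hvan _ hab
end
end

section
/- Growth factor modulus: for the (2+1)D scheme with constant real m and V, Δ_x = Δ_y = Δ, c = ħ = 1, and CFL ratio Δt/Δ ≤ 1/√2, both eigenvalues λ± of the amplification matrix G = S⁻¹S* have |λ±| = 1 for all real wave vectors (k_x, k_y), where S = [[1/Δt − (m+V)/i, 0],[(2i/Δ)sin(k_xΔ/2) + i(2i/Δ)sin(k_yΔ/2), 1/Δt + (m−V)/i]]. -/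
/-!
For a 2 × 2 matrix `S`, `det S · charpoly (S⁻¹ Sᴴ) (λ) = det (λ S - Sᴴ) = D λ² - E λ + D̄` with
`D = det S` and `E` real, so the eigenvalues come in pairs `λ, 1/λ̄`. Such a self-inversive
quadratic has both roots on the unit circle as soon as `E² ≤ 4 |D|²`, and for the staggered
scheme this discriminant condition is exactly what the CFL bound `Δt/Δ ≤ 1/√2` provides.
-/

noncomputable section
open Complex Real Matrix
open ComplexConjugate

theorem Matrix.det_mul_eval_charpoly_inv_mul {n K : Type*} [Fintype n] [DecidableEq n] [Field K]
    (S T : Matrix n n K) (hS : S.det ≠ 0) (x : K) :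
    S.det * (S⁻¹ * T).charpoly.eval x = (x • S - T).det := by
  rw [eval_charpoly, ← det_mul, mul_sub, ← mul_assoc, mul_nonsing_inv _ hS.isUnit, one_mul,
    scalar_apply, ← smul_eq_mul_diagonal]

theorem Matrix.det_smul_sub_conjTranspose_fin_two (a b c d x : ℂ) :
    (x • !![a, b; c, d] - !![a, b; c, d]ᴴ).det =
      (a * d - b * c) * x ^ 2
        - ((2 * (a * conj d).re - normSq b - normSq c : ℝ) : ℂ) * x + conj (a * d - b * c) := by
  rw [ofReal_sub, ofReal_sub, ← add_conj, ← mul_conj, ← mul_conj]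
  simp [det_fin_two, conjTranspose_apply]
  ring

theorem Complex.norm_eq_of_sq_sub_mul_add_sq_eq_zero {r E : ℝ} (hr : 0 ≤ r)
    (hE : E ^ 2 ≤ 4 * r ^ 2) {y : ℂ} (h : y ^ 2 - E * y + r ^ 2 = 0) : ‖y‖ = r := by
  obtain ⟨hre, him⟩ := Complex.ext_iff.mp h
  simp only [sub_re, add_re, sub_im, add_im, pow_two, mul_re, mul_im, ofReal_re, ofReal_im,
    zero_re, zero_im] at hre him
  -- either `y` is real, and then a double root, or `y.re = E / 2`
  have hmid : 2 * y.re - E = 0 := by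
    rcases mul_eq_zero.mp (show y.im * (2 * y.re - E) = 0 by linarith) with hv | hu
    · rw [hv] at hre
      nlinarith [sq_nonneg (2 * y.re - E)]
    · exact hu
  have hsq : ‖y‖ ^ 2 = r ^ 2 := by
    rw [Complex.sq_norm, normSq_apply]
    linear_combination -hre + y.re * hmid
  exact (pow_left_inj₀ (norm_nonneg y) hr two_ne_zero).mp hsq

theorem Complex.norm_eq_one_of_mul_sq_sub_mul_add_conj_eq_zero {D x : ℂ} {E : ℝ} (hD : D ≠ 0)
    (hE : E ^ 2 ≤ 4 * normSq D) (h : D * x ^ 2 - E * x + conj D = 0) : ‖x‖ = 1 := by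
  have hy : (D * x) ^ 2 - E * (D * x) + (‖D‖ : ℂ) ^ 2 = 0 := by
    linear_combination D * h - mul_conj' D
  have hDx := norm_eq_of_sq_sub_mul_add_sq_eq_zero (norm_nonneg D)
    (by rwa [Complex.sq_norm]) hy
  rw [norm_mul] at hDx
  exact (mul_eq_left₀ (norm_ne_zero_iff.mpr hD)).mp hDx

theorem Matrix.norm_eq_one_of_isRoot_charpoly_inv_mul_conjTranspose_fin_two {a b c d x : ℂ}
    (hS : a * d - b * c ≠ 0)
    (hE : (2 * (a * conj d).re - normSq b - normSq c) ^ 2 ≤ 4 * normSq (a * d - b * c))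
    (hx : (!![a, b; c, d]⁻¹ * !![a, b; c, d]ᴴ).charpoly.IsRoot x) : ‖x‖ = 1 := by
  have hdet := det_fin_two_of a b c d
  have h := det_mul_eval_charpoly_inv_mul !![a, b; c, d] !![a, b; c, d]ᴴ (hdet ▸ hS) x
  rw [hx.eq_zero, mul_zero, det_smul_sub_conjTranspose_fin_two] at h
  exact norm_eq_one_of_mul_sq_sub_mul_add_conj_eq_zero hS hE h.symm

theorem sq_two_mul_sub_le_of_le_four_mul_sq {s p q B : ℝ} (hB0 : 0 ≤ B) (hB : B ≤ 4 * s ^ 2) :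
    (2 * (s ^ 2 - p * q) - B) ^ 2 ≤ 4 * ((s ^ 2 + p ^ 2) * (s ^ 2 + q ^ 2)) := by
  nlinarith [mul_nonneg hB0 (sub_nonneg.2 hB), sq_nonneg (p - q), sq_nonneg (p + q),
    mul_nonneg (sq_nonneg s) (sq_nonneg (p - q))]

theorem sq_sin_add_sq_sin_le_of_div_le_inv_sqrt_two {Δt Δ : ℝ} (hΔt : 0 < Δt) (hΔ : 0 < Δ)
    (hCFL : Δt / Δ ≤ 1 / √2) (u v : ℝ) :
    (2 / Δ * Real.sin u) ^ 2 + (2 / Δ * Real.sin v) ^ 2 ≤ 4 * (1 / Δt) ^ 2 := by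
  have hρ : (Δt / Δ) ^ 2 ≤ 1 / 2 := by
    calc (Δt / Δ) ^ 2 ≤ (1 / √2) ^ 2 := by gcongr
      _ = 1 / 2 := by rw [div_pow, sq_sqrt zero_le_two, one_pow]
  rw [div_pow, div_le_iff₀ (by positivity)] at hρ
  have hu := sin_sq_le_one u
  have hv := sin_sq_le_one v
  rw [mul_pow, mul_pow, div_pow, div_pow]
  field_simp
  nlinarith

/-- Growth factor modulus for the (2+1)D staggered scheme (constant real `m`, `V`,
`Δ_x = Δ_y = Δ`, `c = ħ = 1`): with CFL ratio `Δt/Δ ≤ 1/√2`, both eigenvalues of the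
amplification matrix `G = S⁻¹S*` lie on the unit circle for all real wave vectors. -/
theorem stmt_16 (m V Δt Δ kx ky : ℝ) (hΔt : 0 < Δt) (hΔ : 0 < Δ)
    (hCFL : Δt / Δ ≤ 1 / Real.sqrt 2) :
    ∀ lam : ℂ,
      (Matrix.charpoly
        ((!![(1 / Δt : ℂ) - ((m : ℂ) + V) / Complex.I, 0;
            (2 * Complex.I / Δ) * Real.sin (kx * Δ / 2)
              + Complex.I * ((2 * Complex.I / Δ) * Real.sin (ky * Δ / 2)),
            (1 / Δt : ℂ) + ((m : ℂ) - V) / Complex.I])⁻¹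
          * (!![(1 / Δt : ℂ) - ((m : ℂ) + V) / Complex.I, 0;
            (2 * Complex.I / Δ) * Real.sin (kx * Δ / 2)
              + Complex.I * ((2 * Complex.I / Δ) * Real.sin (ky * Δ / 2)),
            (1 / Δt : ℂ) + ((m : ℂ) - V) / Complex.I])ᴴ)).IsRoot lam →
      ‖lam‖ = 1 := by
  intro lam hroot
  have hB := sq_sin_add_sq_sin_le_of_div_le_inv_sqrt_two hΔt hΔ hCFL (kx * Δ / 2) (ky * Δ / 2)
  set sx := Real.sin (kx * Δ / 2)
  set sy := Real.sin (ky * Δ / 2)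
  set a : ℂ := (1 / Δt : ℂ) - ((m : ℂ) + V) / I with ha
  set b : ℂ := (2 * I / Δ) * sx + I * ((2 * I / Δ) * sy) with hb
  set d : ℂ := (1 / Δt : ℂ) + ((m : ℂ) - V) / I with hd
  have hdet : normSq (a * d - 0 * b)
      = ((1 / Δt) ^ 2 + (m + V) ^ 2) * ((1 / Δt) ^ 2 + (m - V) ^ 2) := by
    simp [ha, hd, normSq_apply, div_I]
    ring
  have hre : (a * conj d).re = (1 / Δt) ^ 2 - (m + V) * (m - V) := by
    simp [ha, hd, div_I]
    ring
  have hnormb : normSq b = (2 / Δ * sx) ^ 2 + (2 / Δ * sy) ^ 2 := by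
    simp [hb, normSq_apply]
    ring
  refine norm_eq_one_of_isRoot_charpoly_inv_mul_conjTranspose_fin_two ?_ ?_ hroot
  · exact normSq_pos.mp (by rw [hdet]; positivity)
  · rw [hdet, hre, hnormb, normSq_zero, sub_zero]
    exact sq_two_mul_sub_le_of_le_four_mul_sq (by positivity) hB
end
end
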